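/- arXiv:1807.00216 — 3 statements merged into one kernel-verified Lean document; each statement's English description precedes it below -/
import Mathlib

section
/- Let D, A, B be preadditive categories, each having a zero object. Let F : A ⥤ D be a fully faithful functor admitting a left adjoint F^L : D ⥤ A, and let G : B ⥤ D be a fully faithful functor admitting a right adjoint G^R : D ⥤ B. Let S_A be a class of objects of A such that any object X of A satisfying Hom_A(X, s) = 0 for every s ∈ S_A is a zero object, and let S_B be a class of objects of B such that any object Y of B satisfying Hom_B(t, Y) = 0 for every t ∈ S_B is a zero object. If Hom_D(G(t), F(s)) = 0 for every s ∈ S_A and every t ∈ S_B, then Hom_D(G(b), F(a)) = 0 for every object a of A and every object b of B. -/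
open CategoryTheory CategoryTheory.Limits

/-- Semiorthogonality of two admissible subcategories can be checked on spanning
classes: if `F : A ⥤ D` is fully faithful with a left adjoint, `G : B ⥤ D` is fully
faithful with a right adjoint, `S_A` detects zero objects of `A` via vanishing of
`Hom(X, s)` and `S_B` detects zero objects of `B` via vanishing of `Hom(t, Y)`, and
all morphisms `G t ⟶ F s` vanish for `s ∈ S_A`, `t ∈ S_B`, then all morphisms
`G b ⟶ F a` vanish. -/
theorem orthogonality_via_spanning_classes
    {D A B : Type*} [Category D] [Category A] [Category B]
    [Preadditive D] [Preadditive A] [Preadditive B]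
    [HasZeroObject D] [HasZeroObject A] [HasZeroObject B]
    (F : A ⥤ D) [F.Full] [F.Faithful] (FL : D ⥤ A) (adjF : FL ⊣ F)
    (G : B ⥤ D) [G.Full] [G.Faithful] (GR : D ⥤ B) (adjG : G ⊣ GR)
    (SA : Set A) (SB : Set B)
    (hSA : ∀ X : A, (∀ s ∈ SA, ∀ f : X ⟶ s, f = 0) → IsZero X)
    (hSB : ∀ Y : B, (∀ t ∈ SB, ∀ f : t ⟶ Y, f = 0) → IsZero Y)
    (h : ∀ s ∈ SA, ∀ t ∈ SB, ∀ f : G.obj t ⟶ F.obj s, f = 0) :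
    ∀ (a : A) (b : B) (f : G.obj b ⟶ F.obj a), f = 0 := by
  -- Step 1: for each t ∈ SB, FL (G t) is zero, hence Hom(G t, F a) = 0 for all a.
  have key : ∀ t ∈ SB, ∀ (a : A) (f : G.obj t ⟶ F.obj a), f = 0 := by
    intro t ht a f
    have hz : IsZero (FL.obj (G.obj t)) := by
      apply hSA
      intro s hs g
      have h1 : (adjF.homEquiv (G.obj t) s) g = (adjF.homEquiv (G.obj t) s) 0 := by
        rw [h s hs t ht ((adjF.homEquiv (G.obj t) s) g),
          h s hs t ht ((adjF.homEquiv (G.obj t) s) 0)]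
      exact (adjF.homEquiv (G.obj t) s).injective h1
    have hgg : (adjF.homEquiv (G.obj t) a).symm f
        = (adjF.homEquiv (G.obj t) a).symm 0 := hz.eq_of_src _ _
    exact (adjF.homEquiv (G.obj t) a).symm.injective hgg
  intro a b f
  have hz : IsZero (GR.obj (F.obj a)) := by
    apply hSB
    intro t ht g
    have h1 : (adjG.homEquiv t (F.obj a)).symm g = (adjG.homEquiv t (F.obj a)).symm 0 := by
      rw [key t ht a ((adjG.homEquiv t (F.obj a)).symm g),
        key t ht a ((adjG.homEquiv t (F.obj a)).symm 0)]
    exact (adjG.homEquiv t (F.obj a)).symm.injective h1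
  have hgg : (adjG.homEquiv b (F.obj a)) f
      = (adjG.homEquiv b (F.obj a)) 0 := hz.eq_of_tgt _ _
  exact (adjG.homEquiv b (F.obj a)).injective hgg
end

section
/- Fix integers r ≥ 2 and g. In the formal power series ring ℤ[[x, y]] define P = ∏_{i=1}^{r−1} (1 + x^i y^{i+1})^g · (1 + x^{i+1} y^i)^g · (1 − (xy)^i)^{−1} · (1 − (xy)^{i+1})^{−1}, where each factor 1 − (xy)^k (k ≥ 1) is a unit of ℤ[[x, y]] since it has constant term 1. Then: (1) the coefficient of the monomial y (that is, of x^0 y^1) in P is 0; (2) the coefficient of the monomial xy (that is, of x^1 y^1) in P is 1; (3) the coefficient of the monomial x^2 y in P is g; (4) for every integer i ≥ 3, the coefficient of the monomial x^i y in P is 0. -/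
/-!
Compute modulo `y²`, i.e. in `ℤ[[x, y]] ⧸ (y²)`. There every factor with `i ≥ 2` becomes `1`,
the denominator becomes `1 - xy`, whose inverse is `1 + xy`, and the numerator becomes
`(1 + x²y)^g = 1 + g x²y`. Hence `P ≡ 1 + xy + g x²y`, and the coefficients of `y`-degree at most
one are read off from this polynomial.
-/

open MvPowerSeries

section SquareZero

variable {A : Type*} [CommRing A]

lemma one_add_pow_of_sq_eq_zero {u : A} (hu : u ^ 2 = 0) (n : ℕ) :
    (1 + u) ^ n = 1 + n * u := by
  induction n with
  | zero => simp
  | succ n ih =>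
    rw [pow_succ, ih]
    push_cast
    linear_combination (n : A) * hu

variable {x y : A}

lemma prod_one_sub_mul_pow_of_sq_eq_zero (hy : y ^ 2 = 0) {r : ℕ} (hr : 2 ≤ r) :
    ∏ i ∈ Finset.Icc 1 (r - 1), ((1 - (x * y) ^ i) * (1 - (x * y) ^ (i + 1))) = 1 - x * y := by
  have hvanish : ∀ {i : ℕ}, 2 ≤ i → (x * y) ^ i = 0 := fun hi => by
    rw [mul_pow, pow_eq_zero_of_le hi hy, mul_zero]
  rw [Finset.prod_eq_single_of_mem 1 (Finset.mem_Icc.mpr ⟨le_rfl, by omega⟩)]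
  · rw [hvanish le_rfl, pow_one, sub_zero, mul_one]
  · intro i hi hi1
    have hi2 : 2 ≤ i := by rw [Finset.mem_Icc] at hi; omega
    rw [hvanish hi2, hvanish (by omega), sub_zero, mul_one]

lemma prod_one_add_pow_mul_pow_of_sq_eq_zero (hy : y ^ 2 = 0) {r : ℕ} (hr : 2 ≤ r) (g : ℕ) :
    ∏ i ∈ Finset.Icc 1 (r - 1),
        ((1 + x ^ i * y ^ (i + 1)) ^ g * (1 + x ^ (i + 1) * y ^ i) ^ g) = 1 + g * (x ^ 2 * y) := by
  have hvanish : ∀ {a b : ℕ}, 2 ≤ b → x ^ a * y ^ b = 0 := fun hb => by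
    rw [pow_eq_zero_of_le hb hy, mul_zero]
  rw [Finset.prod_eq_single_of_mem 1 (Finset.mem_Icc.mpr ⟨le_rfl, by omega⟩)]
  · rw [hvanish le_rfl, pow_one, add_zero, one_pow, one_mul,
      one_add_pow_of_sq_eq_zero (by linear_combination x ^ 4 * hy)]
  · intro i hi hi1
    have hi2 : 2 ≤ i := by rw [Finset.mem_Icc] at hi; omega
    rw [hvanish hi2, hvanish (by omega), add_zero, one_pow, one_mul]

lemma eq_of_mul_prod_eq_prod_of_sq_eq_zero (hy : y ^ 2 = 0) {r : ℕ} (hr : 2 ≤ r) (g : ℕ) {p : A}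
    (hp : p * ∏ i ∈ Finset.Icc 1 (r - 1), ((1 - (x * y) ^ i) * (1 - (x * y) ^ (i + 1))) =
      ∏ i ∈ Finset.Icc 1 (r - 1),
        ((1 + x ^ i * y ^ (i + 1)) ^ g * (1 + x ^ (i + 1) * y ^ i) ^ g)) :
    p = 1 + x * y + g * (x ^ 2 * y) := by
  rw [prod_one_sub_mul_pow_of_sq_eq_zero hy hr, prod_one_add_pow_mul_pow_of_sq_eq_zero hy hr] at hp
  linear_combination (1 + x * y) * hp + (p * x ^ 2 + g * x ^ 3) * hy

end SquareZero

lemma MvPowerSeries.coeff_eq_of_X_pow_dvd_sub {σ R : Type*} [CommRing R] {s : σ} {n : ℕ}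
    {f g : MvPowerSeries σ R} (h : X s ^ n ∣ f - g) {m : σ →₀ ℕ} (hm : m s < n) :
    coeff m f = coeff m g := by
  rw [← sub_eq_zero, ← map_sub]
  exact X_pow_dvd_iff.mp h m hm

lemma coeff_one_add_X_mul_X_add_C_mul_X_sq_mul_X (g : ℤ) (a : ℕ) :
    coeff (Finsupp.single 0 a + Finsupp.single 1 1)
      (1 + X 0 * X 1 + C g * (X 0 ^ 2 * X 1) : MvPowerSeries (Fin 2) ℤ) =
      if a = 1 then 1 else if a = 2 then g else 0 := by
  simp only [map_add, coeff_C_mul, coeff_one, X, monomial_pow, monomial_mul_monomial, coeff_monomial]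
  split_ifs <;> simp_all [Finsupp.ext_iff]

/-- The length-one summand of del Baño's formula for the Hodge–Poincaré polynomial:
the power series
`P = ∏_{i=1}^{r-1} (1 + x^i y^(i+1))^g (1 + x^(i+1) y^i)^g (1-(xy)^i)⁻¹ (1-(xy)^(i+1))⁻¹`
in `ℤ[[x,y]]` (characterised by `P · ∏ (1-(xy)^i)(1-(xy)^(i+1)) = ∏ (numerators)`,
which determines `P` uniquely since each `1 - (xy)^k` is a unit) has coefficient `0`
at `y`, coefficient `1` at `xy`, coefficient `g` at `x²y`, and coefficient `0` at
`x^i y` for all `i ≥ 3`. -/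
theorem hodge_number_coefficients (r : ℕ) (hr : 2 ≤ r) (g : ℕ)
    (P : MvPowerSeries (Fin 2) ℤ)
    (hP : P * ∏ i ∈ Finset.Icc 1 (r - 1),
        ((1 - (MvPowerSeries.X (0 : Fin 2) * MvPowerSeries.X (1 : Fin 2)) ^ i) *
          (1 - (MvPowerSeries.X (0 : Fin 2) * MvPowerSeries.X (1 : Fin 2)) ^ (i + 1)))
      = ∏ i ∈ Finset.Icc 1 (r - 1),
        ((1 + MvPowerSeries.X (0 : Fin 2) ^ i * MvPowerSeries.X (1 : Fin 2) ^ (i + 1)) ^ g *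
          (1 + MvPowerSeries.X (0 : Fin 2) ^ (i + 1) * MvPowerSeries.X (1 : Fin 2) ^ i) ^ g)) :
    MvPowerSeries.coeff (Finsupp.single (1 : Fin 2) 1) P = 0 ∧
    MvPowerSeries.coeff
      (Finsupp.single (0 : Fin 2) 1 + Finsupp.single (1 : Fin 2) 1) P = 1 ∧
    MvPowerSeries.coeff
      (Finsupp.single (0 : Fin 2) 2 + Finsupp.single (1 : Fin 2) 1) P = (g : ℤ) ∧
    ∀ i : ℕ, 3 ≤ i →
      MvPowerSeries.coeff
        (Finsupp.single (0 : Fin 2) i + Finsupp.single (1 : Fin 2) 1) P = 0 := by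
  set π := Ideal.Quotient.mk (Ideal.span {(X 1 : MvPowerSeries (Fin 2) ℤ) ^ 2})
  have hy : π (X 1) ^ 2 = 0 := by
    rw [← map_pow, Ideal.Quotient.eq_zero_iff_mem]
    exact Ideal.mem_span_singleton_self _
  have hπP : π P = π (1 + X 0 * X 1 + C (g : ℤ) * (X 0 ^ 2 * X 1)) := by
    have hPmod := congrArg π hP
    simp only [map_mul, map_prod, map_sub, map_add, map_pow, map_one] at hPmod
    rw [eq_of_mul_prod_eq_prod_of_sq_eq_zero hy hr g hPmod]
    simp only [map_mul, map_add, map_pow, map_one, map_natCast]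
  have hdvd := Ideal.mem_span_singleton.mp (Ideal.Quotient.eq.mp hπP)
  have hcoeff (a : ℕ) : coeff (Finsupp.single 0 a + Finsupp.single 1 1) P =
      if a = 1 then 1 else if a = 2 then (g : ℤ) else 0 := by
    rw [coeff_eq_of_X_pow_dvd_sub hdvd (by simp), coeff_one_add_X_mul_X_add_C_mul_X_sq_mul_X]
  refine ⟨by simpa using hcoeff 0, by simpa using hcoeff 1, by simpa using hcoeff 2, ?_⟩
  intro i hi
  rw [hcoeff i, if_neg (by omega), if_neg (by omega)]
end

section
/- Let r ≥ 2, g ≥ 2 and d be integers with gcd(r, d) = 1. Let (r₁, …, r_ℓ) be a composition of r (so each r_i is a positive integer and r₁ + … + r_ℓ = r) of length ℓ ≥ 2. Then, as rational numbers, Σ_{1 ≤ i < j ≤ ℓ} r_i r_j (g − 1) + Σ_{i=1}^{ℓ−1} (r_i + r_{i+1}) · ⟨ −(r₁ + … + r_i) d / r ⟩ ≥ 2, where ⟨α⟩ denotes the fractional part of a rational number α (the unique representative of α mod ℤ in [0, 1)). -/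
/-!
The exponent is `(g - 1) Σ_{i<j} c_i c_j` plus the fractional-part sum, and each piece is at
least `1`. The first because `c_0 c_1 ≥ 1` and `g - 1 ≥ 1`. For the second, every partial sum
`s = c_0 + … + c_i` with `i < ℓ - 1` lies strictly between `0` and `r`, so `r ∤ s d` by
coprimality and `⟨-s d / r⟩ ≥ 1 / r`; and `Σ_{i<ℓ-1} (c_i + c_{i+1}) ≥ r` since every part
occurs in it.
-/

open Finset

theorem inv_le_fract_intCast_div {k : Type*} [Field k] [LinearOrder k] [IsStrictOrderedRing k]
    [FloorRing k] {m : ℤ} {n : ℕ} (hn : 0 < n) (hm : ¬ (n : ℤ) ∣ m) :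
    (n : k)⁻¹ ≤ Int.fract ((m : k) / n) := by
  have hmod : (1 : ℤ) ≤ m % n := by
    have := Int.emod_nonneg m (by exact_mod_cast hn.ne' : (n : ℤ) ≠ 0)
    have : m % n ≠ 0 := fun h => hm (Int.dvd_of_emod_eq_zero h)
    omega
  rw [Int.fract_div_intCast_eq_div_intCast_mod, inv_eq_one_div]
  gcongr
  exact_mod_cast hmod

theorem not_dvd_mul_of_gcd_eq_one_of_lt {r : ℕ} {d : ℤ} (hrd : Int.gcd r d = 1) {s : ℕ}
    (hs₀ : 0 < s) (hsr : s < r) : ¬ (r : ℤ) ∣ s * d := fun h =>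
  have hrs : r ∣ s := Int.natCast_dvd_natCast.mp (Int.dvd_of_dvd_mul_left_of_gcd_one h hrd)
  hsr.not_ge (Nat.le_of_dvd hs₀ hrs)


theorem sum_range_le_sum_range_add_succ {m : ℕ} (hm : 0 < m) (c : ℕ → ℕ) :
    ∑ i ∈ range (m + 1), c i ≤ ∑ i ∈ range m, (c i + c (i + 1)) := by
  have hc₀ : c 0 ≤ ∑ i ∈ range m, c i :=
    single_le_sum (fun i _ => Nat.zero_le (c i)) (mem_range.mpr hm)
  rw [sum_add_distrib, sum_range_succ' c m]
  omega

theorem sum_range_succ_pos_and_lt {ℓ : ℕ} {c : ℕ → ℕ} (hc : ∀ i < ℓ, 1 ≤ c i) {i : ℕ}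
    (hi : i + 1 < ℓ) :
    0 < ∑ k ∈ range (i + 1), c k ∧ ∑ k ∈ range (i + 1), c k < ∑ k ∈ range ℓ, c k := by
  constructor
  · rw [sum_range_succ']
    have := hc 0 (by omega)
    omega
  · exact sum_lt_sum_of_subset (range_subset_range.mpr hi.le) (mem_range.mpr hi)
      (by simp) (hc _ hi) (fun _ _ _ => Nat.zero_le _)

theorem one_le_sum_range_mul {ℓ : ℕ} (hℓ : 2 ≤ ℓ) {c : ℕ → ℕ} (hc : ∀ i < ℓ, 1 ≤ c i) :
    1 ≤ ∑ j ∈ range ℓ, ∑ i ∈ range j, c i * c j := by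
  calc 1 ≤ c 0 * c 1 := one_le_mul (hc 0 (by omega)) (hc 1 (by omega))
    _ = ∑ i ∈ range 1, c i * c 1 := by simp
    _ ≤ _ := single_le_sum (f := fun j => ∑ i ∈ range j, c i * c j)
        (fun _ _ => Nat.zero_le _) (mem_range.mpr (by omega))

theorem one_le_sum_add_succ_mul_fract {r : ℕ} {d : ℤ} (hrd : Int.gcd r d = 1) {ℓ : ℕ}
    (hℓ : 2 ≤ ℓ) {c : ℕ → ℕ} (hc : ∀ i < ℓ, 1 ≤ c i) (hsum : ∑ i ∈ range ℓ, c i = r) :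
    1 ≤ ∑ i ∈ range (ℓ - 1), ((c i : ℚ) + c (i + 1)) *
      Int.fract (-(∑ k ∈ range (i + 1), (c k : ℚ)) * d / r) := by
  obtain ⟨m, rfl⟩ : ∃ m, ℓ = m + 1 := ⟨ℓ - 1, by omega⟩
  have hr : 0 < r := by
    have := hc 0 (by omega)
    rw [← hsum, sum_range_succ']
    omega
  have hterm : ∀ i ∈ range m, ((c i : ℚ) + c (i + 1)) * (r : ℚ)⁻¹ ≤
      ((c i : ℚ) + c (i + 1)) * Int.fract (-(∑ k ∈ range (i + 1), (c k : ℚ)) * d / r) := by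
    intro i hi
    obtain ⟨hpos, hlt⟩ := sum_range_succ_pos_and_lt hc (i := i) (by rw [mem_range] at hi; omega)
    have hndvd : ¬ (r : ℤ) ∣ -((∑ k ∈ range (i + 1), c k : ℕ) * d) := by
      rw [Int.dvd_neg]; exact not_dvd_mul_of_gcd_eq_one_of_lt hrd hpos (hsum ▸ hlt)
    gcongr
    convert inv_le_fract_intCast_div (k := ℚ) hr hndvd using 2
    push_cast; ring
  have hr' : (0 : ℚ) < r := by exact_mod_cast hr
  calc (1 : ℚ) = r * (r : ℚ)⁻¹ := (mul_inv_cancel₀ hr'.ne').symm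
    _ ≤ (∑ i ∈ range m, (c i + c (i + 1)) : ℕ) * (r : ℚ)⁻¹ := by
        gcongr
        exact hsum ▸ sum_range_le_sum_range_add_succ (by omega) c
    _ = ∑ i ∈ range m, ((c i : ℚ) + c (i + 1)) * (r : ℚ)⁻¹ := by push_cast; rw [sum_mul]
    _ ≤ _ := by rw [Nat.add_sub_cancel]; exact sum_le_sum hterm

theorem del_bano_exponent_ge_two_general (r : ℕ) (g d : ℤ) (hg : 2 ≤ g)
    (hgcd : Int.gcd (r : ℤ) d = 1)
    (ℓ : ℕ) (hℓ : 2 ≤ ℓ) (c : ℕ → ℕ)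
    (hc : ∀ i < ℓ, 1 ≤ c i) (hsum : ∑ i ∈ Finset.range ℓ, c i = r) :
    (2 : ℚ) ≤
      (∑ j ∈ Finset.range ℓ, ∑ i ∈ Finset.range j,
        (c i : ℚ) * (c j : ℚ) * ((g : ℚ) - 1)) +
      ∑ i ∈ Finset.range (ℓ - 1),
        ((c i : ℚ) + (c (i + 1) : ℚ)) *
          Int.fract (-(∑ k ∈ Finset.range (i + 1), (c k : ℚ)) * (d : ℚ) / (r : ℚ)) := by
  have hpairs : (1 : ℚ) ≤ ∑ j ∈ range ℓ, ∑ i ∈ range j, (c i : ℚ) * c j := by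
    exact_mod_cast one_le_sum_range_mul hℓ hc
  have hgenus : (1 : ℚ) ≤ g - 1 := by
    have : (2 : ℚ) ≤ g := by exact_mod_cast hg
    linarith
  have hfirst : (1 : ℚ) ≤ ∑ j ∈ range ℓ, ∑ i ∈ range j, (c i : ℚ) * c j * (g - 1) := by
    simpa only [sum_mul] using one_le_mul_of_one_le_of_one_le hpairs hgenus
  linarith [one_le_sum_add_succ_mul_fract hgcd hℓ hc hsum]

/-- For any composition `r = c 0 + … + c (ℓ-1)` of length `ℓ ≥ 2` of `r ≥ 2`, with
`g ≥ 2` and `gcd(r, d) = 1`, the exponent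
`Σ_{i<j} c i · c j · (g-1) + Σ_{i=0}^{ℓ-2} (c i + c (i+1)) · ⟨-(c 0 + … + c i)·d/r⟩`
appearing in del Baño's formula is at least `2`.  Here `⟨α⟩ = Int.fract α` is the
fractional part of a rational number. -/
theorem del_bano_exponent_ge_two (r : ℕ) (hr : 2 ≤ r) (g d : ℤ) (hg : 2 ≤ g)
    (hgcd : Int.gcd (r : ℤ) d = 1)
    (ℓ : ℕ) (hℓ : 2 ≤ ℓ) (c : ℕ → ℕ)
    (hc : ∀ i < ℓ, 1 ≤ c i) (hsum : ∑ i ∈ Finset.range ℓ, c i = r) :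
    (2 : ℚ) ≤
      (∑ j ∈ Finset.range ℓ, ∑ i ∈ Finset.range j,
        (c i : ℚ) * (c j : ℚ) * ((g : ℚ) - 1)) +
      ∑ i ∈ Finset.range (ℓ - 1),
        ((c i : ℚ) + (c (i + 1) : ℚ)) *
          Int.fract (-(∑ k ∈ Finset.range (i + 1), (c k : ℚ)) * (d : ℚ) / (r : ℚ)) :=
  del_bano_exponent_ge_two_general r g d hg hgcd ℓ hℓ c hc hsum
end
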